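/- arXiv:math/0703412 — 2 statements merged into one kernel-verified Lean document; each statement's English description precedes it below -/
import Mathlib

section
/- Let T be a maximal monotone operator on ℝⁿ with T^{-1}(0) ≠ ∅. Then the proximal point iteration x^{p+1} = (I + T)^{-1}(x^p), starting from any x⁰ ∈ ℝⁿ, converges to a point x* satisfying 0 ∈ T(x*). -/
/-!
The resolvent `F` of a monotone operator is firmly nonexpansive, and its fixed points are the
zeros of `T`. Firm nonexpansiveness gives, for every fixed point `z`,
`‖x (p+1) - z‖² + ‖x p - x (p+1)‖² ≤ ‖x p - z‖²`, so the iterates stay bounded and the steps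
`x p - x (p+1)` are square-summable, hence tend to `0`. By Bolzano–Weierstrass a subsequence
converges to some `a`, which is a fixed point by continuity of `F`; since `‖x p - a‖` is
nonincreasing, the whole sequence converges to `a`.
-/

open scoped RealInnerProductSpace

/-- A multivalued operator on `E` is monotone. -/
def IsMonotoneOp {n : ℕ} (T : EuclideanSpace ℝ (Fin n) → Set (EuclideanSpace ℝ (Fin n))) : Prop :=
  ∀ x y u v, u ∈ T x → v ∈ T y → 0 ≤ ⟪u - v, x - y⟫

/-- A multivalued operator is maximal monotone. -/
def IsMaximalMonotoneOp {n : ℕ}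
    (T : EuclideanSpace ℝ (Fin n) → Set (EuclideanSpace ℝ (Fin n))) : Prop :=
  IsMonotoneOp T ∧ ∀ S : EuclideanSpace ℝ (Fin n) → Set (EuclideanSpace ℝ (Fin n)),
    IsMonotoneOp S → (∀ x, T x ⊆ S x) → ∀ x, S x = T x

open Filter Topology Finset Function Metric

theorem LipschitzWith.antitone_dist_of_isFixedPt {X : Type*} [PseudoMetricSpace X] {F : X → X}
    (hF : LipschitzWith 1 F) {a : X} (ha : IsFixedPt F a) {x : ℕ → X}
    (hx : ∀ p, x (p + 1) = F (x p)) : Antitone fun p => dist (x p) a :=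
  antitone_nat_of_succ_le fun p => by
    simpa [hx p, ha.eq] using hF.dist_le_mul (x p) a

theorem tendsto_of_antitone_dist_of_subseq {X : Type*} [PseudoMetricSpace X] {x : ℕ → X} {a : X}
    (hanti : Antitone fun p => dist (x p) a) {φ : ℕ → ℕ} (hφ : StrictMono φ)
    (hlim : Tendsto (x ∘ φ) atTop (𝓝 a)) : Tendsto x atTop (𝓝 a) :=
  tendsto_iff_dist_tendsto_zero.2 <|
    (tendsto_iff_tendsto_subseq_of_antitone hanti hφ.tendsto_atTop).2
      (tendsto_iff_dist_tendsto_zero.1 hlim)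

def FirmlyNonexpansive {E : Type*} [SeminormedAddCommGroup E] (F : E → E) : Prop :=
  ∀ a b, ‖F a - F b‖ ^ 2 + ‖(a - F a) - (b - F b)‖ ^ 2 ≤ ‖a - b‖ ^ 2

namespace FirmlyNonexpansive

section Seminormed

variable {E : Type*} [SeminormedAddCommGroup E] {F : E → E}

theorem norm_sub_le (hF : FirmlyNonexpansive F) (a b : E) : ‖F a - F b‖ ≤ ‖a - b‖ :=
  (pow_le_pow_iff_left₀ (norm_nonneg _) (norm_nonneg _) two_ne_zero).1 <|
    le_of_add_le_of_nonneg_left (hF a b) (sq_nonneg _)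

theorem lipschitzWith (hF : FirmlyNonexpansive F) : LipschitzWith 1 F :=
  LipschitzWith.of_dist_le_mul fun a b => by
    simpa [dist_eq_norm] using hF.norm_sub_le a b

theorem norm_sq_add_norm_sq_le_of_isFixedPt (hF : FirmlyNonexpansive F) {z : E}
    (hz : IsFixedPt F z) (a : E) : ‖F a - z‖ ^ 2 + ‖a - F a‖ ^ 2 ≤ ‖a - z‖ ^ 2 := by
  simpa [hz.eq] using hF a z

theorem sum_norm_sq_add_norm_sq_le (hF : FirmlyNonexpansive F) {z : E} (hz : IsFixedPt F z)
    {x : ℕ → E} (hx : ∀ p, x (p + 1) = F (x p)) (N : ℕ) :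
    ∑ p ∈ range N, ‖x p - F (x p)‖ ^ 2 + ‖x N - z‖ ^ 2 ≤ ‖x 0 - z‖ ^ 2 := by
  induction N with
  | zero => simp
  | succ N ih =>
    have hstep := hF.norm_sq_add_norm_sq_le_of_isFixedPt hz (x N)
    rw [sum_range_succ, hx N]
    linarith

theorem tendsto_sub_apply_zero (hF : FirmlyNonexpansive F) {z : E} (hz : IsFixedPt F z)
    {x : ℕ → E} (hx : ∀ p, x (p + 1) = F (x p)) :
    Tendsto (fun p => x p - F (x p)) atTop (𝓝 0) := by
  have hsummable : Summable fun p => ‖x p - F (x p)‖ ^ 2 :=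
    summable_of_sum_range_le (fun _ => sq_nonneg _) fun N =>
      le_of_add_le_of_nonneg_left (hF.sum_norm_sq_add_norm_sq_le hz hx N) (sq_nonneg _)
  have hsqrt := hsummable.tendsto_atTop_zero.sqrt
  simp only [Real.sqrt_sq (norm_nonneg _), Real.sqrt_zero] at hsqrt
  exact tendsto_zero_iff_norm_tendsto_zero.2 hsqrt

end Seminormed

theorem exists_isFixedPt_tendsto {E : Type*} [NormedAddCommGroup E] [ProperSpace E] {F : E → E}
    (hF : FirmlyNonexpansive F) (hfix : ∃ z, IsFixedPt F z) {x : ℕ → E}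
    (hx : ∀ p, x (p + 1) = F (x p)) : ∃ a, IsFixedPt F a ∧ Tendsto x atTop (𝓝 a) := by
  obtain ⟨z, hz⟩ := hfix
  have hbounded : ∀ p, x p ∈ closedBall z (dist (x 0) z) := fun p =>
    hF.lipschitzWith.antitone_dist_of_isFixedPt hz hx (Nat.zero_le p)
  obtain ⟨a, -, φ, hφ, hlim⟩ := tendsto_subseq_of_bounded isBounded_closedBall hbounded
  have ha : IsFixedPt F a := by
    have hto_sub := hlim.sub ((hF.lipschitzWith.continuous.tendsto a).comp hlim)
    have hto_zero := (hF.tendsto_sub_apply_zero hz hx).comp hφ.tendsto_atTop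
    exact (sub_eq_zero.1 (tendsto_nhds_unique hto_sub hto_zero)).symm
  exact ⟨a, ha, tendsto_of_antitone_dist_of_subseq
    (hF.lipschitzWith.antitone_dist_of_isFixedPt ha hx) hφ hlim⟩

end FirmlyNonexpansive

def IsResolvent {n : ℕ} (T : EuclideanSpace ℝ (Fin n) → Set (EuclideanSpace ℝ (Fin n)))
    (F : EuclideanSpace ℝ (Fin n) → EuclideanSpace ℝ (Fin n)) : Prop :=
  ∀ x y, F x = y ↔ x - y ∈ T y

namespace IsResolvent

variable {n : ℕ} {T : EuclideanSpace ℝ (Fin n) → Set (EuclideanSpace ℝ (Fin n))}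
  {F : EuclideanSpace ℝ (Fin n) → EuclideanSpace ℝ (Fin n)}

theorem sub_apply_mem (hF : IsResolvent T F) (a : EuclideanSpace ℝ (Fin n)) :
    a - F a ∈ T (F a) :=
  (hF a (F a)).1 rfl

theorem isFixedPt_iff (hF : IsResolvent T F) (z : EuclideanSpace ℝ (Fin n)) :
    IsFixedPt F z ↔ 0 ∈ T z := by
  rw [IsFixedPt, hF, sub_self]

theorem firmlyNonexpansive (hF : IsResolvent T F) (hT : IsMonotoneOp T) : FirmlyNonexpansive F := by
  intro a b
  have hmono := hT _ _ _ _ (hF.sub_apply_mem a) (hF.sub_apply_mem b)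
  have hsplit : a - b = (F a - F b) + ((a - F a) - (b - F b)) := by abel
  rw [hsplit, norm_add_sq_real, real_inner_comm]
  linarith

end IsResolvent

theorem proximal_point_algorithm_converges (n : ℕ)
    (T : EuclideanSpace ℝ (Fin n) → Set (EuclideanSpace ℝ (Fin n)))
    (hT : IsMaximalMonotoneOp T)
    (F : EuclideanSpace ℝ (Fin n) → EuclideanSpace ℝ (Fin n))
    (hF : ∀ x y, F x = y ↔ x - y ∈ T y)
    (hsol : ∃ z, 0 ∈ T z)
    (x : ℕ → EuclideanSpace ℝ (Fin n))
    (hx : ∀ p, x (p + 1) = F (x p)) :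
    ∃ xstar, 0 ∈ T xstar ∧ Filter.Tendsto x Filter.atTop (nhds xstar) := by
  have hres : IsResolvent T F := hF
  obtain ⟨a, ha, hlim⟩ := (hres.firmlyNonexpansive hT.1).exists_isFixedPt_tendsto
    (hsol.imp fun z => (hres.isFixedPt_iff z).2) hx
  exact ⟨a, (hres.isFixedPt_iff a).1 ha, hlim⟩
end

section
/- Let A : ℝⁿ → ℝⁿ be a single-valued monotone continuous operator such that the equation A x = 0 has a solution. Then the iteration x^{p+1} = (I + A)^{-1}(x^p) converges to a point x* with A x* = 0. -/
/-!
The proximal point iterates are Fejér monotone with respect to the zero set of `A`: for every zero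
`w`, monotonicity of `A` gives `‖x (p+1) - w‖² + ‖x (p+1) - x p‖² ≤ ‖x p - w‖²`. Hence the
iterates are bounded and the steps `x p - x (p+1) = A (x (p+1))` tend to `0`. A cluster point of
the bounded sequence is therefore a zero of `A` by continuity, and Fejér monotonicity with respect
to that zero upgrades subsequential convergence to convergence of the whole sequence.
-/

open Filter Topology
open scoped RealInnerProductSpace

theorem tendsto_of_antitone_dist_of_tendsto_subseq {X : Type*} [PseudoMetricSpace X]
    {x : ℕ → X} {y : X} (hanti : Antitone fun p => dist (x p) y) {φ : ℕ → ℕ}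
    (hφ : StrictMono φ) (hsub : Tendsto (x ∘ φ) atTop (𝓝 y)) :
    Tendsto x atTop (𝓝 y) := by
  have hbdd : BddBelow (Set.range fun p => dist (x p) y) :=
    ⟨0, by rintro _ ⟨p, rfl⟩; exact dist_nonneg⟩
  have hinf := tendsto_atTop_ciInf hanti hbdd
  have hinf_eq : (⨅ p, dist (x p) y) = 0 :=
    tendsto_nhds_unique (hinf.comp hφ.tendsto_atTop) (tendsto_iff_dist_tendsto_zero.mp hsub)
  rw [hinf_eq] at hinf
  exact tendsto_iff_dist_tendsto_zero.mpr hinf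

section ProximalPoint

variable {E : Type*} [NormedAddCommGroup E] [InnerProductSpace ℝ E] {A : E → E} {x : ℕ → E}

theorem norm_sub_sq_add_norm_step_sq_le (hmono : ∀ u v, 0 ≤ ⟪A u - A v, u - v⟫)
    (hstep : ∀ p, x (p + 1) + A (x (p + 1)) = x p) {w : E} (hw : A w = 0) (p : ℕ) :
    ‖x (p + 1) - w‖ ^ 2 + ‖x (p + 1) - x p‖ ^ 2 ≤ ‖x p - w‖ ^ 2 := by
  have hA : A (x (p + 1)) = x p - x (p + 1) := eq_sub_of_add_eq' (hstep p)
  have hinner : 0 ≤ ⟪x p - x (p + 1), x (p + 1) - w⟫ := by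
    simpa [hw, hA] using hmono (x (p + 1)) w
  have hexpand : ‖x p - w‖ ^ 2
      = ‖x p - x (p + 1)‖ ^ 2 + 2 * ⟪x p - x (p + 1), x (p + 1) - w⟫
        + ‖x (p + 1) - w‖ ^ 2 := by
    rw [← norm_add_sq_real, sub_add_sub_cancel]
  rw [hexpand, norm_sub_rev (x (p + 1)) (x p)]
  linarith

theorem antitone_dist_of_resolvent_step (hmono : ∀ u v, 0 ≤ ⟪A u - A v, u - v⟫)
    (hstep : ∀ p, x (p + 1) + A (x (p + 1)) = x p) {w : E} (hw : A w = 0) :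
    Antitone fun p => dist (x p) w := by
  refine antitone_nat_of_succ_le fun p => ?_
  simp only [dist_eq_norm]
  have hfejer := norm_sub_sq_add_norm_step_sq_le hmono hstep hw p
  exact (pow_le_pow_iff_left₀ (norm_nonneg _) (norm_nonneg _) two_ne_zero).mp
    (by linarith [sq_nonneg ‖x (p + 1) - x p‖])

theorem tendsto_apply_zero_of_resolvent_step (hmono : ∀ u v, 0 ≤ ⟪A u - A v, u - v⟫)
    (hstep : ∀ p, x (p + 1) + A (x (p + 1)) = x p) {w : E} (hw : A w = 0) :
    Tendsto (fun p => A (x p)) atTop (𝓝 0) := by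
  set d : ℕ → ℝ := fun p => dist (x p) w ^ 2
  have hd : Tendsto d atTop (𝓝 ((⨅ p, dist (x p) w) ^ 2)) :=
    (tendsto_atTop_ciInf (antitone_dist_of_resolvent_step hmono hstep hw)
      ⟨0, by rintro _ ⟨p, rfl⟩; exact dist_nonneg⟩).pow 2
  have hdecr : Tendsto (fun p => d p - d (p + 1)) atTop (𝓝 0) := by
    simpa using hd.sub ((tendsto_add_atTop_iff_nat 1).mpr hd)
  have hsq : Tendsto (fun p => ‖A (x (p + 1))‖ ^ 2) atTop (𝓝 0) := by
    refine squeeze_zero (fun p => by positivity) (fun p => ?_) hdecr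
    have hfejer := norm_sub_sq_add_norm_step_sq_le hmono hstep hw p
    rw [eq_sub_of_add_eq' (hstep p), norm_sub_rev]
    simp only [d, dist_eq_norm]
    linarith
  rw [← tendsto_add_atTop_iff_nat 1, tendsto_zero_iff_norm_tendsto_zero]
  simpa using hsq.sqrt

theorem exists_zero_tendsto_of_resolvent_step [ProperSpace E]
    (hmono : ∀ u v, 0 ≤ ⟪A u - A v, u - v⟫) (hcont : Continuous A) (hsol : ∃ z, A z = 0)
    (hstep : ∀ p, x (p + 1) + A (x (p + 1)) = x p) :
    ∃ y, A y = 0 ∧ Tendsto x atTop (𝓝 y) := by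
  obtain ⟨z, hz⟩ := hsol
  have hbounded : ∀ p, x p ∈ Metric.closedBall z (dist (x 0) z) := fun p =>
    antitone_dist_of_resolvent_step hmono hstep hz (Nat.zero_le p)
  obtain ⟨y, -, φ, hφ, hsub⟩ := tendsto_subseq_of_bounded Metric.isBounded_closedBall hbounded
  have hy : A y = 0 :=
    tendsto_nhds_unique ((hcont.tendsto y).comp hsub)
      ((tendsto_apply_zero_of_resolvent_step hmono hstep hz).comp hφ.tendsto_atTop)
  exact ⟨y, hy, tendsto_of_antitone_dist_of_tendsto_subseq
    (antitone_dist_of_resolvent_step hmono hstep hy) hφ hsub⟩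

end ProximalPoint

theorem resolvent_iteration_monotone_continuous (n : ℕ)
    (A : EuclideanSpace ℝ (Fin n) → EuclideanSpace ℝ (Fin n))
    (hmono : ∀ x y, 0 ≤ ⟪A x - A y, x - y⟫)
    (hcont : Continuous A)
    (hsol : ∃ z, A z = 0)
    (F : EuclideanSpace ℝ (Fin n) → EuclideanSpace ℝ (Fin n))
    (hF : ∀ x, F x + A (F x) = x)
    (x : ℕ → EuclideanSpace ℝ (Fin n))
    (hx : ∀ p, x (p + 1) = F (x p)) :
    ∃ xstar, A xstar = 0 ∧ Filter.Tendsto x Filter.atTop (nhds xstar) :=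
  exists_zero_tendsto_of_resolvent_step hmono hcont hsol fun p => hx p ▸ hF (x p)
end
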